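/- Fix integers m > 1 and K > ⌊m/2⌋ with K ≥ 2. Let {z_n} be generated by the selective sampling process S(κ,Φ) where κ satisfies Σ_{n=1}^∞ ρ^{κ(n)} = ∞ for every 0 < ρ ≤ 1, and Φ is the non-modal count heuristic Φ(x,S) = |V_S(x)| − modefreq_f(V_S(x)) with V_S(x) the K-nearest neighbors of x with respect to S. If x ∈ X is contained in an f-contiguous component of positive μ-measure, then the m nearest neighbors predictions satisfy ζ_n(x) → f(x) with probability one. -/

import Mathlib

open MeasureTheory ProbabilityTheory Filter Metric

/-- The support of a measure on a metric space: points all of whose open balls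
have positive measure. -/
def measSupport {X : Type*} [MetricSpace X] [MeasurableSpace X]
    (μ : Measure X) : Set X :=
  {x | ∀ ε > 0, 0 < μ (ball x ε)}

/-- `b` is an `f`-boundary point iff every ball about `b` meets the set of points
with a different `f`-value in positive measure. -/
def IsFBoundaryPoint {X Y : Type*} [MetricSpace X] [MeasurableSpace X]
    (f : X → Y) (μ : Measure X) (b : X) : Prop :=
  ∀ ε > 0, 0 < μ (ball b ε ∩ {x | f x ≠ f b})

/-- The sample set `Z_n(ω) = {z_1(ω), …, z_n(ω)}`. -/
def sampleSet {X Ω : Type*} (z : ℕ → Ω → X) (n : ℕ) (ω : Ω) : Set X :=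
  {p | ∃ k, 1 ≤ k ∧ k ≤ n ∧ z k ω = p}

/-- `modefreq_f(A)`: the frequency of the mode of `A` under `f`, i.e. the
maximum over `y` of the number of elements of `A` with `f`-value `y`. -/
noncomputable def modeFreq {X Y : Type*} (f : X → Y) (A : Set X) : ℕ :=
  ⨆ y : Y, (A ∩ f ⁻¹' {y}).ncard

/-- `V` is a set of `K` nearest neighbors of `x` in `S`: a `K`-element subset of
`S` minimizing distance to `x`, and among all such, minimizing `modefreq_f`. -/
def IsKNNSet {X Y : Type*} [MetricSpace X] (f : X → Y) (K : ℕ)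
    (S : Set X) (x : X) (V : Finset X) : Prop :=
  V.card = K ∧ ↑V ⊆ S ∧
    (∀ v ∈ V, ∀ s ∈ S, s ∉ V → dist x v ≤ dist x s) ∧
    ∀ W : Finset X, W.card = K → ↑W ⊆ S →
      (∀ v ∈ W, ∀ s ∈ S, s ∉ W → dist x v ≤ dist x s) →
      modeFreq f (↑V : Set X) ≤ modeFreq f (↑W : Set X)

open scoped Classical in
/-- The non-modal count heuristic with `K`-nearest neighbors:
`Φ(x,S) = |V_S(x)| − modefreq_f(V_S(x))`, where `V_S(x)` is a `K`-set of
nearest neighbors of `x` minimizing `modefreq_f` (so the value is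
`K - min modefreq`), and `V_S(x) = ∅` when `x ∈ S`. -/
noncomputable def nmcKNN {X Y : Type*} [MetricSpace X] (f : X → Y) (K : ℕ)
    (x : X) (S : Set X) : ℤ :=
  if x ∈ S then 0
  else (K : ℤ) - sInf {m : ℕ | ∃ V : Finset X, IsKNNSet f K S x V ∧
    modeFreq f (↑V : Set X) = m}

/-- `R` is `f`-contiguous: `R` is connected, `f` is constant on `R`, `R` lies in
the support of `μ`, and `R` contains no `f`-boundary point. -/
def IsFContiguous {X Y : Type*} [MetricSpace X] [MeasurableSpace X]
    (f : X → Y) (μ : Measure X) (R : Set X) : Prop :=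
  IsPreconnected R ∧ (∀ a ∈ R, ∀ b ∈ R, f a = f b) ∧
    R ⊆ measSupport μ ∧ ∀ b ∈ R, ¬ IsFBoundaryPoint f μ b

/-- An `f`-contiguous component: a maximal `f`-contiguous set. -/
def IsFContiguousComponent {X Y : Type*} [MetricSpace X] [MeasurableSpace X]
    (f : X → Y) (μ : Measure X) (C : Set X) : Prop :=
  IsFContiguous f μ C ∧ ∀ R : Set X, IsFContiguous f μ R → C ⊆ R → R = C

/-!
Since `x` is not an `f`-boundary point, some ball `B_ε(x)` meets the other labels only in a null
set, which almost surely no candidate ever hits; so every sample in `B_ε(x)` carries the label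
`f x`. Every ball `B_δ(x)` has positive measure `a`, and `∑ a ^ κ(n) = ∞`, so by the second
Borel–Cantelli lemma almost surely infinitely often all candidates of a step, hence the selected
sample, lie in `B_δ(x)`. Thus `x` is a limit of samples: either `x` is sampled itself, or `B_ε(x)`
eventually contains `m` samples, the `m` nearest samples to `x` all lie in `B_ε(x)`, and their
unanimous label `f x` is the only possible mode.
-/

open scoped ENNReal NNReal

section Sampling

variable {X Ω : Type*} [MeasurableSpace X] [MeasurableSpace Ω] {P : Measure Ω} {μ : Measure X}

lemma ae_notMem_of_map_eq {g : Ω → X} (hg : Measurable g) (hlaw : P.map g = μ) {N : Set X}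
    (hN : μ N = 0) : ∀ᵐ ω ∂P, g ω ∉ N :=
  ae_of_ae_map hg.aemeasurable (hlaw ▸ measure_eq_zero_iff_ae_notMem.1 hN)

variable {k : ℕ → ℕ} {g : (n : ℕ) → Fin (k n) → Ω → X}

lemma measure_biInter_iInter_preimage (hmeas : ∀ n i, Measurable (g n i))
    (hlaw : ∀ n i, P.map (g n i) = μ)
    (hindep : iIndepFun (fun p : Σ n, Fin (k n) => g p.1 p.2) P) {A : Set X} (hA : MeasurableSet A)
    (s : Finset ℕ) :
    P (⋂ n ∈ s, ⋂ i, g n i ⁻¹' A) = ∏ n ∈ s, μ A ^ k n := by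
  have hblocks : (⋂ n ∈ s, ⋂ i, g n i ⁻¹' A) =
      ⋂ p ∈ s.sigma fun n => (Finset.univ : Finset (Fin (k n))),
        (fun ω => g p.1 p.2 ω) ⁻¹' A := by
    ext ω
    simp only [Set.mem_iInter, Set.mem_preimage, Finset.mem_sigma, Finset.mem_univ, and_true,
      Sigma.forall]
    exact forall_congr' fun n => forall_comm
  rw [hblocks, hindep.measure_inter_preimage_eq_mul _ (sets := fun _ => A) fun _ _ => hA,
    Finset.prod_sigma]
  refine Finset.prod_congr rfl fun n _ => ?_
  simp [← Measure.map_apply (hmeas n _) hA, hlaw]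

lemma ae_frequently_forall_mem [IsProbabilityMeasure P] (hmeas : ∀ n i, Measurable (g n i))
    (hlaw : ∀ n i, P.map (g n i) = μ)
    (hindep : iIndepFun (fun p : Σ n, Fin (k n) => g p.1 p.2) P) {A : Set X} (hA : MeasurableSet A)
    (hsum : ∑' n, μ A ^ k n = ∞) :
    ∀ᵐ ω ∂P, ∃ᶠ n in atTop, ∀ i, g n i ω ∈ A := by
  set E : ℕ → Set Ω := fun n => ⋂ i, g n i ⁻¹' A
  have hE : ∀ n, MeasurableSet (E n) := fun n => .iInter fun i => hmeas n i hA
  have hPE : ∀ n, P (E n) = μ A ^ k n := fun n => by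
    simpa using measure_biInter_iInter_preimage hmeas hlaw hindep hA {n}
  have hindepE : iIndepSet E P := by
    rw [iIndepSet_iff_meas_biInter hE]
    intro s
    simp only [hPE, E, measure_biInter_iInter_preimage hmeas hlaw hindep hA]
  have hlimsup := measure_limsup_eq_one hE hindepE (by simpa only [hPE] using hsum)
  have hlimsup_meas := (MeasurableSet.measurableSet_limsup hE).nullMeasurableSet (μ := P)
  filter_upwards [(ae_mem_iff_measure_eq hlimsup_meas).2 (by rw [hlimsup, measure_univ])] with ω hω
  simpa [E, mem_limsup_iff_frequently_mem] using hω

end Sampling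

lemma ENNReal.tsum_pow_eq_top_of_tendsto {k : ℕ → ℕ} {a : ℝ≥0∞} (ha : a ≠ ∞)
    (hk : Tendsto (fun N => ∑ n ∈ Finset.Icc 1 N, a.toReal ^ k n) atTop atTop) :
    ∑' n, a ^ k (n + 1) = ∞ := by
  lift a to ℝ≥0 using ha
  have hsum : ¬ Summable fun n => a ^ k (n + 1) := by
    rw [← NNReal.summable_coe,
      not_summable_iff_tendsto_nat_atTop_of_nonneg fun _ => by positivity]
    refine hk.congr fun N => ?_
    push_cast
    rw [← Nat.Ico_zero_eq_range, Finset.sum_Ico_add' (fun n => a.toReal ^ k n),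
      ← Finset.Ico_add_one_right_eq_Icc]
    simp
  simpa [← ENNReal.coe_pow] using ENNReal.tsum_coe_ne_top_iff_summable.not.2 hsum

lemma eq_of_ncard_inter_preimage_eq_modeFreq {X Y : Type*} {f : X → Y} {A : Set X}
    (hA : A.Finite) (hne : A.Nonempty) {y y' : Y} (hfA : ∀ a ∈ A, f a = y)
    (hmode : (A ∩ f ⁻¹' {y'}).ncard = modeFreq f A) : y' = y := by
  by_contra hne'
  have hbdd : BddAbove (Set.range fun y => (A ∩ f ⁻¹' {y}).ncard) :=
    ⟨A.ncard, by rintro _ ⟨y, rfl⟩; exact Set.ncard_le_ncard Set.inter_subset_left hA⟩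
  have hempty : A ∩ f ⁻¹' {y'} = ∅ :=
    Set.eq_empty_of_forall_notMem fun a ha => hne' (ha.2.symm.trans (hfA a ha.1))
  have hfull : A ∩ f ⁻¹' {y} = A := Set.inter_eq_left.2 fun a ha => hfA a ha
  have hle : A.ncard ≤ modeFreq f A :=
    calc A.ncard = (A ∩ f ⁻¹' {y}).ncard := by rw [hfull]
      _ ≤ modeFreq f A := le_ciSup hbdd y
  rw [hempty, Set.ncard_empty] at hmode
  exact ((Set.ncard_pos hA).2 hne).ne' (Nat.le_zero.1 (hmode ▸ hle))

section NearestNeighbors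

variable {X Y : Type*} [MetricSpace X]

lemma dist_lt_of_mem_nearest {x : X} {S : Set X} {U T : Finset X} {r : ℝ}
    (hUT : U.card ≤ T.card) (hTS : ↑T ⊆ S) (hTr : ∀ t ∈ T, dist x t < r)
    (hnear : ∀ u ∈ U, ∀ s ∈ S, s ∉ U → dist x u ≤ dist x s) {u : X} (hu : u ∈ U) :
    dist x u < r := by
  by_cases hTU : T ⊆ U
  · exact hTr u (Finset.eq_of_subset_of_card_le hTU hUT ▸ hu)
  · obtain ⟨t, ht, htU⟩ := Finset.not_subset.1 hTU
    exact (hnear u hu t (hTS ht) htU).trans_lt (hTr t ht)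

lemma eq_of_nearest_of_ncard_eq_modeFreq {f : X → Y} {x : X} {S : Set X} {U T : Finset X}
    {r : ℝ} {y : Y} (hU : U.Nonempty) (hUT : U.card ≤ T.card) (hUS : ↑U ⊆ S) (hTS : ↑T ⊆ S)
    (hTr : ∀ t ∈ T, dist x t < r) (hnear : ∀ u ∈ U, ∀ s ∈ S, s ∉ U → dist x u ≤ dist x s)
    (hS : ∀ s ∈ S, dist x s < r → f s = f x)
    (hmode : ((↑U : Set X) ∩ f ⁻¹' {y}).ncard = modeFreq f ↑U) : y = f x :=
  eq_of_ncard_inter_preimage_eq_modeFreq U.finite_toSet (Finset.coe_nonempty.2 hU)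
    (fun u hu => hS u (hUS hu) (dist_lt_of_mem_nearest hUT hTS hTr hnear hu)) hmode

end NearestNeighbors

lemma Set.infinite_ball_inter_of_mem_closure {X : Type*} [MetricSpace X] {s : Set X} {x : X}
    (hx : x ∈ closure s) (hxs : x ∉ s) {ε : ℝ} (hε : 0 < ε) : (ball x ε ∩ s).Infinite :=
  Set.Infinite.of_accPt (x := x) <| accPt_iff_nhds.2 fun U hU => by
    obtain ⟨y, ⟨hyU, hyε⟩, hys⟩ :=
      mem_closure_iff_nhds.1 hx _ (Filter.inter_mem hU (ball_mem_nhds x hε))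
    exact ⟨y, ⟨hyU, hyε, hys⟩, fun h => hxs (h ▸ hys)⟩

section SampleSet

variable {X Ω : Type*} {z : ℕ → Ω → X} {ω : Ω}

lemma sampleSet_mono : Monotone fun n => sampleSet z n ω :=
  fun _ _ hnm _ ⟨k, hk1, hkn, hk⟩ => ⟨k, hk1, hkn.trans hnm, hk⟩

lemma eventually_exists_finset_subset_inter_sampleSet {B : Set X}
    (hB : (B ∩ ⋃ n, sampleSet z n ω).Infinite) (m : ℕ) :
    ∀ᶠ n in atTop, ∃ T : Finset X, T.card = m ∧ ↑T ⊆ B ∩ sampleSet z n ω := by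
  obtain ⟨T, hTB, hTcard⟩ := hB.exists_subset_card_eq m
  have hT : ∀ᶠ n in atTop, ∀ t ∈ T, t ∈ sampleSet z n ω := by
    refine (Filter.eventually_all_finset T).2 fun t ht => ?_
    obtain ⟨n, htn⟩ := Set.mem_iUnion.1 (hTB ht).2
    exact Filter.eventually_atTop.2 ⟨n, fun n' hn' => sampleSet_mono hn' htn⟩
  exact hT.mono fun n hn => ⟨T, hTcard, fun t ht => ⟨(hTB ht).1, hn t ht⟩⟩

lemma iUnion_sampleSet_subset {k : ℕ → ℕ} {cand : (n : ℕ) → Fin (k n) → Ω → X}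
    (hsample : ∀ n, ∃ i, z (n + 1) ω = cand n i ω) {B : Set X}
    (hB : ∀ n i, cand n i ω ∈ B) : ⋃ n, sampleSet z n ω ⊆ B := by
  rintro _ hp
  obtain ⟨-, k, hk1, -, rfl⟩ := Set.mem_iUnion.1 hp
  obtain ⟨j, rfl⟩ := Nat.exists_eq_add_of_le' hk1
  obtain ⟨i, hi⟩ := hsample j
  exact hi ▸ hB j i

end SampleSet

section SamplePath

variable {X Y Ω : Type*} [MetricSpace X] {z : ℕ → Ω → X} {ω : Ω} {k : ℕ → ℕ}
  {cand : (n : ℕ) → Fin (k n) → Ω → X}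

lemma mem_closure_iUnion_sampleSet (hsample : ∀ n, ∃ i, z (n + 1) ω = cand n i ω) {x : X}
    (hnear : ∀ j : ℕ, ∃ n, ∀ i, cand n i ω ∈ ball x (1 / (j + 1))) :
    x ∈ closure (⋃ n, sampleSet z n ω) := Metric.mem_closure_iff.2 fun δ hδ => by
  obtain ⟨j, hj⟩ := exists_nat_one_div_lt hδ
  obtain ⟨n, hn⟩ := hnear j
  obtain ⟨i, hi⟩ := hsample n
  exact ⟨z (n + 1) ω, Set.mem_iUnion.2 ⟨n + 1, n + 1, le_add_self, le_rfl, rfl⟩,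
    (mem_ball'.1 (hi ▸ hn i)).trans hj⟩

lemma eventually_mNN_eq_of_mem_closure {f : X → Y} {m : ℕ} {ζ : ℕ → Y} {x : X} {ε : ℝ}
    (hm : 0 < m) (hε : 0 < ε) (hζ_mem : ∀ n, m ≤ n → x ∈ sampleSet z n ω → ζ n = f x)
    (hζ : ∀ n, m ≤ n → x ∉ sampleSet z n ω → ∃ U : Finset X,
      U.card = m ∧ ↑U ⊆ sampleSet z n ω ∧
      (∀ u ∈ U, ∀ s ∈ sampleSet z n ω, s ∉ U → dist x u ≤ dist x s) ∧
      ((↑U : Set X) ∩ f ⁻¹' {ζ n}).ncard = modeFreq f ↑U)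
    (hclean : ∀ p ∈ ⋃ n, sampleSet z n ω, dist x p < ε → f p = f x)
    (hx : x ∈ closure (⋃ n, sampleSet z n ω)) :
    ∀ᶠ n in atTop, ζ n = f x := by
  by_cases hxZ : x ∈ ⋃ n, sampleSet z n ω
  · obtain ⟨n, hn⟩ := Set.mem_iUnion.1 hxZ
    filter_upwards [eventually_ge_atTop (max m n)] with n' hn'
    exact hζ_mem n' (le_of_max_le_left hn') (sampleSet_mono (le_of_max_le_right hn') hn)
  filter_upwards [eventually_ge_atTop m, eventually_exists_finset_subset_inter_sampleSet
    (Set.infinite_ball_inter_of_mem_closure hx hxZ hε) m] with n hmn ⟨T, hTcard, hTsub⟩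
  obtain ⟨U, hUcard, hUS, hUnear, hUmode⟩ := hζ n hmn fun h => hxZ (Set.mem_iUnion_of_mem n h)
  exact eq_of_nearest_of_ncard_eq_modeFreq (Finset.card_pos.1 (by omega))
    (hUcard.trans hTcard.symm).le hUS (fun t ht => (hTsub ht).2)
    (fun t ht => mem_ball'.1 (hTsub ht).1) hUnear
    (fun s hs => hclean s (Set.mem_iUnion_of_mem n hs)) hUmode

end SamplePath

theorem nmc_knn_mNN_pointwise_convergence_general
    {X : Type*} [MetricSpace X] [MeasurableSpace X] [BorelSpace X]
    {Y : Type*}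
    (μ : Measure X) [IsProbabilityMeasure μ] (f : X → Y)
    {Ω : Type*} [MeasurableSpace Ω] (P : Measure Ω) [IsProbabilityMeasure P]
    (m : ℕ) (hm : 1 < m)
    (K : ℕ)
    -- the candidate-count function κ : ℕ⁺ → ℕ⁺ (κ (n+1) candidates at step n+1)
    (κ : ℕ → ℕ)
    (hκ : ∀ ρ : ℝ, 0 < ρ → ρ ≤ 1 →
      Tendsto (fun N => ∑ n ∈ Finset.Icc 1 N, ρ ^ κ n) atTop atTop)
    -- at step n+1, κ(n+1) candidates are drawn, iid with law μ
    (cand : (n : ℕ) → Fin (κ (n + 1)) → Ω → X)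
    (hmeas : ∀ n i, Measurable (cand n i))
    (hlaw : ∀ n i, P.map (cand n i) = μ)
    (hindep : iIndepFun
      (m := fun _ : Σ n : ℕ, Fin (κ (n + 1)) => (inferInstance : MeasurableSpace X))
      (fun p => cand p.1 p.2) P)
    -- the sample z_{n+1} is a candidate maximizing the heuristic Φ(·, Z_n)
    (z : ℕ → Ω → X)
    (hsel : ∀ ω n, ∃ i : Fin (κ (n + 1)), z (n + 1) ω = cand n i ω ∧
      ∀ j : Fin (κ (n + 1)),
        nmcKNN f K (cand n j ω) (sampleSet z n ω) ≤
          nmcKNN f K (cand n i ω) (sampleSet z n ω))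
    -- ζ_n is an m nearest neighbors prediction over Z_n: on the most ambiguous
    -- m-set of nearest samples, predict a modal f-value (ties broken arbitrarily)
    (ζ : ℕ → Ω → X → Y)
    (hζ_mem : ∀ ω x n, m ≤ n → x ∈ sampleSet z n ω → ζ n ω x = f x)
    (hζ : ∀ ω x n, m ≤ n → x ∉ sampleSet z n ω → ∃ U : Finset X,
      U.card = m ∧ ↑U ⊆ sampleSet z n ω ∧
      (∀ u ∈ U, ∀ s ∈ sampleSet z n ω, s ∉ U → dist x u ≤ dist x s) ∧
      (∀ W : Finset X, W.card = m → ↑W ⊆ sampleSet z n ω →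
        (∀ u ∈ W, ∀ s ∈ sampleSet z n ω, s ∉ W → dist x u ≤ dist x s) →
        modeFreq f (↑U : Set X) ≤ modeFreq f (↑W : Set X)) ∧
      ((↑U : Set X) ∩ f ⁻¹' {ζ n ω x}).ncard = modeFreq f (↑U : Set X))
    (x : X) (C : Set X) (hC : IsFContiguousComponent f μ C) (hxC : x ∈ C) :
    ∀ᵐ ω ∂P, ∀ᶠ n in atTop, ζ n ω x = f x := by
  obtain ⟨⟨-, -, hsupp, hbd⟩, -⟩ := hC
  obtain ⟨ε, hε, hε0⟩ : ∃ ε > 0, μ (ball x ε ∩ {y | f y ≠ f x}) = 0 := by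
    simpa [IsFBoundaryPoint] using hbd x hxC
  have hclean : ∀ᵐ ω ∂P, ∀ n i, cand n i ω ∈ (ball x ε ∩ {y | f y ≠ f x})ᶜ :=
    ae_all_iff.2 fun n => ae_all_iff.2 fun i => ae_notMem_of_map_eq (hmeas n i) (hlaw n i) hε0
  have hnear : ∀ᵐ ω ∂P, ∀ j : ℕ, ∃ᶠ n in atTop, ∀ i, cand n i ω ∈ ball x (1 / (j + 1)) :=
    ae_all_iff.2 fun j => ae_frequently_forall_mem (k := fun n => κ (n + 1)) hmeas hlaw hindep
      measurableSet_ball <| ENNReal.tsum_pow_eq_top_of_tendsto (measure_ne_top μ _) <|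
        hκ _ (ENNReal.toReal_pos (hsupp hxC _ (by positivity)).ne' (measure_ne_top μ _))
          (ENNReal.toReal_le_of_le_ofReal zero_le_one (by simpa using prob_le_one))
  filter_upwards [hclean, hnear] with ω hclean hnear
  have hsample : ∀ n, ∃ i, z (n + 1) ω = cand n i ω := fun n => (hsel ω n).imp fun _ h => h.1
  refine eventually_mNN_eq_of_mem_closure (by omega) hε (hζ_mem ω x) (fun n hmn hx => ?_)
    (fun p hp hpε => ?_) (mem_closure_iUnion_sampleSet hsample fun j => (hnear j).exists)
  · obtain ⟨U, hUcard, hUS, hUnear, -, hUmode⟩ := hζ ω x n hmn hx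
    exact ⟨U, hUcard, hUS, hUnear, hUmode⟩
  · by_contra hne
    exact iUnion_sampleSet_subset hsample hclean hp ⟨mem_ball'.2 hpε, hne⟩

/-- **The `K`-nearest neighbor non-modal count heuristic under the `m` nearest
neighbors rule.** Fix `m > 1` and `K ≥ 2` with `K > ⌊m/2⌋`. If the samples are
generated by the selective sampling process `S(κ, Φ)` with
`Φ(x,S) = |V_S(x)| − modefreq_f(V_S(x))` (`V_S(x)` the `K`-nearest neighbors)
and `∑ ρ^{κ(n)} = ∞` for all `0 < ρ ≤ 1`, then at every point `x` contained in
an `f`-contiguous component of positive measure, the `m` nearest neighbors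
predictions `ζ_n(x)` converge to `f(x)` with probability one. -/
theorem nmc_knn_mNN_pointwise_convergence
    {X : Type*} [MetricSpace X] [MeasurableSpace X] [BorelSpace X]
    {Y : Type*} [Countable Y]
    (μ : Measure X) [IsProbabilityMeasure μ] (f : X → Y)
    {Ω : Type*} [MeasurableSpace Ω] (P : Measure Ω) [IsProbabilityMeasure P]
    (m : ℕ) (hm : 1 < m)
    (K : ℕ) (hK : 2 ≤ K) (hKm : m / 2 < K)
    -- the candidate-count function κ : ℕ⁺ → ℕ⁺ (κ (n+1) candidates at step n+1)
    (κ : ℕ → ℕ) (hκpos : ∀ n, 1 ≤ κ n)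
    (hκ : ∀ ρ : ℝ, 0 < ρ → ρ ≤ 1 →
      Tendsto (fun N => ∑ n ∈ Finset.Icc 1 N, ρ ^ κ n) atTop atTop)
    -- at step n+1, κ(n+1) candidates are drawn, iid with law μ
    (cand : (n : ℕ) → Fin (κ (n + 1)) → Ω → X)
    (hmeas : ∀ n i, Measurable (cand n i))
    (hlaw : ∀ n i, P.map (cand n i) = μ)
    (hindep : iIndepFun
      (m := fun _ : Σ n : ℕ, Fin (κ (n + 1)) => (inferInstance : MeasurableSpace X))
      (fun p => cand p.1 p.2) P)
    -- the sample z_{n+1} is a candidate maximizing the heuristic Φ(·, Z_n)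
    (z : ℕ → Ω → X)
    (hsel : ∀ ω n, ∃ i : Fin (κ (n + 1)), z (n + 1) ω = cand n i ω ∧
      ∀ j : Fin (κ (n + 1)),
        nmcKNN f K (cand n j ω) (sampleSet z n ω) ≤
          nmcKNN f K (cand n i ω) (sampleSet z n ω))
    -- ζ_n is an m nearest neighbors prediction over Z_n: on the most ambiguous
    -- m-set of nearest samples, predict a modal f-value (ties broken arbitrarily)
    (ζ : ℕ → Ω → X → Y)
    (hζ_mem : ∀ ω x n, m ≤ n → x ∈ sampleSet z n ω → ζ n ω x = f x)
    (hζ : ∀ ω x n, m ≤ n → x ∉ sampleSet z n ω → ∃ U : Finset X,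
      U.card = m ∧ ↑U ⊆ sampleSet z n ω ∧
      (∀ u ∈ U, ∀ s ∈ sampleSet z n ω, s ∉ U → dist x u ≤ dist x s) ∧
      (∀ W : Finset X, W.card = m → ↑W ⊆ sampleSet z n ω →
        (∀ u ∈ W, ∀ s ∈ sampleSet z n ω, s ∉ W → dist x u ≤ dist x s) →
        modeFreq f (↑U : Set X) ≤ modeFreq f (↑W : Set X)) ∧
      ((↑U : Set X) ∩ f ⁻¹' {ζ n ω x}).ncard = modeFreq f (↑U : Set X))
    (x : X) (C : Set X) (hC : IsFContiguousComponent f μ C) (hxC : x ∈ C)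
    (hCpos : 0 < μ C) :
    ∀ᵐ ω ∂P, ∀ᶠ n in atTop, ζ n ω x = f x :=
  nmc_knn_mNN_pointwise_convergence_general μ f P m hm K κ hκ cand hmeas hlaw hindep z hsel ζ hζ_mem
    hζ x C hC hxC
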